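/- arXiv:1106.3199 — 5 statements merged into one kernel-verified Lean document; each statement's English description precedes it below -/
import Mathlib

section
/- Let a < b and let f : [a,b] → ℝ be càdlàg on [a,b]. Then the function (0,∞) ∋ c ↦ UTV^c(f,[a,b]) ∈ [0,∞) is nonincreasing, convex, and continuous on (0,∞). -/
open Set Filter Topology ENNReal

/-- Truncated variation `TV^c(f,[a,b])` as a supremum over partitions, valued in `[0,∞]`. -/
noncomputable def truncVar (f : ℝ → ℝ) (a b c : ℝ) : ℝ≥0∞ :=
  ⨆ (n : ℕ) (t : ℕ → ℝ) (_ : a ≤ t 0) (_ : ∀ i < n, t i < t (i + 1)) (_ : t n ≤ b),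
    ∑ i ∈ Finset.range n, ENNReal.ofReal (max (|f (t (i + 1)) - f (t i)| - c) 0)

/-- Total variation `TV(f,[a,b])`, valued in `[0,∞]`. -/
noncomputable def totalVar (f : ℝ → ℝ) (a b : ℝ) : ℝ≥0∞ := truncVar f a b 0

/-- Upward truncated variation `UTV^c(f,[a,b])`. -/
noncomputable def upTruncVar (f : ℝ → ℝ) (a b c : ℝ) : ℝ≥0∞ :=
  ⨆ (n : ℕ) (t : ℕ → ℝ) (_ : a ≤ t 0) (_ : ∀ i < n, t i < t (i + 1)) (_ : t n ≤ b),
    ∑ i ∈ Finset.range n, ENNReal.ofReal (max (f (t (i + 1)) - f (t i) - c) 0)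

/-- Downward truncated variation `DTV^c(f,[a,b])`. -/
noncomputable def downTruncVar (f : ℝ → ℝ) (a b c : ℝ) : ℝ≥0∞ :=
  ⨆ (n : ℕ) (t : ℕ → ℝ) (_ : a ≤ t 0) (_ : ∀ i < n, t i < t (i + 1)) (_ : t n ≤ b),
    ∑ i ∈ Finset.range n, ENNReal.ofReal (max (f (t i) - f (t (i + 1)) - c) 0)

/-- `f` is càdlàg on `[a,b]`: right-continuous at every point of `[a,b)` and
with a finite left limit at every point of `(a,b]`. -/
def CadlagOn (f : ℝ → ℝ) (a b : ℝ) : Prop :=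
  (∀ x ∈ Set.Ico a b, Filter.Tendsto f (𝓝[>] x) (𝓝 (f x))) ∧
  (∀ x ∈ Set.Ioc a b, ∃ L : ℝ, Filter.Tendsto f (𝓝[<] x) (𝓝 L))

namespace UTVAux


/-- Bound on all partition sums of `max (increment - c) 0` for partitions in `[x, y]`. -/
def Bnd (f : ℝ → ℝ) (c x y M : ℝ) : Prop :=
  ∀ n : ℕ, ∀ t : ℕ → ℝ, x ≤ t 0 → (∀ i < n, t i < t (i + 1)) → t n ≤ y →
    ∑ i ∈ Finset.range n, max (f (t (i + 1)) - f (t i) - c) 0 ≤ M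

lemma tmono {n : ℕ} {t : ℕ → ℝ} (h : ∀ i < n, t i < t (i + 1)) :
    ∀ i j, i ≤ j → j ≤ n → t i ≤ t j := by
  intro i j hij hjn
  induction j with
  | zero =>
    have : i = 0 := Nat.le_zero.mp hij
    simp [this]
  | succ k ih =>
    rcases Nat.lt_or_ge i (k + 1) with h' | h'
    · exact le_trans (ih (Nat.lt_succ_iff.mp h') (le_trans (Nat.le_succ k) hjn))
        (le_of_lt (h k (by omega)))
    · have : i = k + 1 := le_antisymm hij h'
      simp [this]

lemma Bnd.nonneg {f : ℝ → ℝ} {c x y M : ℝ} (hxy : x ≤ y) (h : Bnd f c x y M) : 0 ≤ M := by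
  simpa using h 0 (fun _ => x) le_rfl (fun i hi => absurd hi (Nat.not_lt_zero i)) hxy

lemma Bnd.mono_left {f : ℝ → ℝ} {c x x' y M : ℝ} (hx : x ≤ x') (h : Bnd f c x y M) :
    Bnd f c x' y M :=
  fun n t h0 hinc hn => h n t (le_trans hx h0) hinc hn

lemma bnd_self (f : ℝ → ℝ) (c x : ℝ) : Bnd f c x x 0 := by
  intro n t h0 hinc hn
  rcases Nat.eq_zero_or_pos n with rfl | hn'
  · simp
  · have h1 := hinc 0 hn'
    have h2 := tmono hinc 1 n hn' le_rfl
    linarith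

lemma max_split {u v c : ℝ} (hc : 0 ≤ c) :
    max (u + v - c) 0 ≤ max (u - c) 0 + max (v - c) 0 + c := by
  have h1 : u - c ≤ max (u - c) 0 := le_max_left _ _
  have h2 : v - c ≤ max (v - c) 0 := le_max_left _ _
  have h3 : (0:ℝ) ≤ max (u - c) 0 := le_max_right _ _
  have h4 : (0:ℝ) ≤ max (v - c) 0 := le_max_right _ _
  rcases le_or_gt (u + v - c) 0 with h | h
  · rw [max_eq_right h]; linarith
  · rw [max_eq_left h.le]; linarith

lemma Bnd.split {f : ℝ → ℝ} {c a x y M₁ M₂ : ℝ} (hc : 0 ≤ c)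
    (hax : a ≤ x) (hxy : x ≤ y)
    (h₁ : Bnd f c a x M₁) (h₂ : Bnd f c x y M₂) :
    Bnd f c a y (M₁ + M₂ + c) := by
  have hM₁ : 0 ≤ M₁ := h₁.nonneg hax
  have hM₂ : 0 ≤ M₂ := h₂.nonneg hxy
  intro n t ht0 hinc htn
  set g : ℕ → ℝ := fun i => max (f (t (i + 1)) - f (t i) - c) 0 with hg
  by_cases hnx : t n ≤ x
  · exact le_trans (h₁ n t ht0 hinc hnx) (by linarith)
  by_cases h0x : x < t 0
  · exact le_trans (h₂ n t h0x.le hinc htn) (by linarith)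
  push_neg at hnx h0x
  have hn : 0 < n := by
    rcases Nat.eq_zero_or_pos n with rfl | h
    · exact absurd (lt_of_le_of_lt h0x hnx) (lt_irrefl _)
    · exact h
  classical
  obtain ⟨k, hkn', hk_le, hmax⟩ : ∃ k, k ≤ n ∧ t k ≤ x ∧ ∀ j, j ≤ n → t j ≤ x → j ≤ k :=
    ⟨Nat.findGreatest (fun i => t i ≤ x) n, Nat.findGreatest_le n,
      Nat.findGreatest_spec (P := fun i => t i ≤ x) (Nat.zero_le n) h0x,
      fun j hj hjx => Nat.le_findGreatest (P := fun i => t i ≤ x) hj hjx⟩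
  have hkn : k < n := lt_of_le_of_ne hkn' (by rintro rfl; exact absurd hk_le (not_le.mpr hnx))
  have hk1 : x < t (k + 1) := by
    by_contra hcon
    push_neg at hcon
    have := hmax (k+1) (by omega) hcon
    omega
  -- decompose the sum
  have hdec : ∑ i ∈ Finset.range n, g i
      = (∑ i ∈ Finset.range k, g i) + g k + ∑ i ∈ Finset.range (n - (k+1)), g (k + 1 + i) := by
    rw [Finset.range_eq_Ico, ← Finset.sum_Ico_consecutive g (Nat.zero_le (k+1)) (by omega),
      Finset.sum_Ico_succ_top (Nat.zero_le k), ← Finset.range_eq_Ico,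
      Finset.sum_Ico_eq_sum_range]
  rcases eq_or_lt_of_le hk_le with hkx | hkx
  · -- t k = x : no crossing term needed
    have p1 : ∑ i ∈ Finset.range k, g i ≤ M₁ :=
      h₁ k t ht0 (fun i hi => hinc i (by omega)) hk_le
    have p2 : g k + ∑ i ∈ Finset.range (n - (k+1)), g (k + 1 + i) ≤ M₂ := by
      have key := h₂ (n - k) (fun i => t (k + i))
        (by show x ≤ t (k + 0); simpa using hkx.symm.le)
        (by intro i hi; show t (k + i) < t (k + i + 1); exact hinc (k + i) (by omega))
        (by show t (k + (n - k)) ≤ y; rw [show k + (n - k) = n by omega]; exact htn)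
      have hrw : ∑ i ∈ Finset.range (n - k),
          max (f (t (k + (i + 1))) - f (t (k + i)) - c) 0
          = g k + ∑ i ∈ Finset.range (n - (k+1)), g (k + 1 + i) := by
        have Fs : ∑ i ∈ Finset.range (n - (k+1)),
            max (f (t (k + (i + 1 + 1))) - f (t (k + (i + 1))) - c) 0
            = ∑ i ∈ Finset.range (n - (k+1)), g (k + 1 + i) := by
          apply Finset.sum_congr rfl
          intro i _
          simp only [hg]
          rw [show k + (i + 1 + 1) = k + 1 + i + 1 by omega,
            show k + (i + 1) = k + 1 + i by omega]
        rw [show n - k = (n - (k+1)) + 1 by omega, Finset.sum_range_succ', Fs]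
        simp only [hg]
        rw [add_comm]
        norm_num
      rw [hrw] at key
      exact key
    rw [hdec]
    linarith
  · -- t k < x : crossing term splits at x
    set A := max (f x - f (t k) - c) 0 with hA
    set B := max (f (t (k+1)) - f x - c) 0 with hB
    set t₁ : ℕ → ℝ := fun i => if i ≤ k then t i else x with ht₁
    have ht₁a : ∀ i, i ≤ k → t₁ i = t i := fun i hi => if_pos hi
    have ht₁b : ∀ i, k < i → t₁ i = x := fun i hi => if_neg (by omega)
    have p1 : (∑ i ∈ Finset.range k, g i) + A ≤ M₁ := by
      have key := h₁ (k+1) t₁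
        (by rw [ht₁a 0 (Nat.zero_le k)]; exact ht0)
        (by
          intro i hi
          rcases Nat.lt_or_ge i k with h' | h'
          · rw [ht₁a i h'.le, ht₁a (i+1) (by omega)]
            exact hinc i (by omega)
          · have hik : i = k := by omega
            rw [hik, ht₁a k le_rfl, ht₁b (k+1) (by omega)]
            exact hkx)
        (by rw [ht₁b (k+1) (by omega)])
      have hrw : ∑ i ∈ Finset.range (k+1),
          max (f (t₁ (i + 1)) - f (t₁ i) - c) 0
          = (∑ i ∈ Finset.range k, g i) + A := by
        rw [Finset.sum_range_succ]
        congr 1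
        · apply Finset.sum_congr rfl
          intro i hi
          rw [Finset.mem_range] at hi
          rw [ht₁a i hi.le, ht₁a (i+1) (by omega)]
        · rw [ht₁a k le_rfl, ht₁b (k+1) (by omega)]
      rw [hrw] at key
      exact key
    set t₂ : ℕ → ℝ := fun i => if i = 0 then x else t (k + i) with ht₂
    have ht₂0 : t₂ 0 = x := if_pos rfl
    have ht₂s : ∀ i, 0 < i → t₂ i = t (k + i) := fun i hi => if_neg (by omega)
    have p2 : B + ∑ i ∈ Finset.range (n - (k+1)), g (k + 1 + i) ≤ M₂ := by
      have key := h₂ (n - k) t₂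
        (by rw [ht₂0])
        (by
          intro i hi
          rcases Nat.eq_zero_or_pos i with rfl | hi'
          · rw [ht₂0, ht₂s 1 one_pos]
            exact hk1
          · rw [ht₂s i hi', ht₂s (i+1) (by omega)]
            exact hinc (k + i) (by omega))
        (by rw [ht₂s (n-k) (by omega), show k + (n - k) = n by omega]; exact htn)
      have hrw : ∑ i ∈ Finset.range (n - k),
          max (f (t₂ (i + 1)) - f (t₂ i) - c) 0
          = B + ∑ i ∈ Finset.range (n - (k+1)), g (k + 1 + i) := by
        have Fs : ∑ i ∈ Finset.range (n - (k+1)),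
            max (f (t₂ (i + 1 + 1)) - f (t₂ (i + 1)) - c) 0
            = ∑ i ∈ Finset.range (n - (k+1)), g (k + 1 + i) := by
          apply Finset.sum_congr rfl
          intro i _
          rw [ht₂s (i+1) (by omega), ht₂s (i+1+1) (by omega)]
          simp only [hg]
          rw [show k + (i + 1 + 1) = k + 1 + i + 1 by omega,
            show k + (i + 1) = k + 1 + i by omega]
        have F0 : max (f (t₂ (0 + 1)) - f (t₂ 0) - c) 0 = B := by
          rw [ht₂0, ht₂s (0+1) one_pos, hB]
        rw [show n - k = (n - (k+1)) + 1 by omega, Finset.sum_range_succ', Fs, F0, add_comm]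
      rw [hrw] at key
      exact key
    have pk : g k ≤ A + B + c := by
      have heq : f (t (k+1)) - f (t k) - c
          = (f x - f (t k)) + (f (t (k+1)) - f x) - c := by ring
      simp only [hg, hA, hB]
      rw [heq]
      exact max_split hc
    rw [hdec]
    linarith

lemma right_local {f : ℝ → ℝ} {a b c : ℝ} (hc : 0 < c) {x : ℝ} (hx : x ∈ Set.Ico a b)
    (hrt : Filter.Tendsto f (𝓝[>] x) (𝓝 (f x))) :
    ∃ y, x < y ∧ y ≤ b ∧ Bnd f c x y 0 := by
  rw [Metric.tendsto_nhdsWithin_nhds] at hrt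
  obtain ⟨δ, hδ, hδ'⟩ := hrt (c/2) (by linarith)
  refine ⟨min (x + δ/2) b, lt_min (by linarith) hx.2, min_le_right _ _, ?_⟩
  intro n t ht0 hinc htn
  have key : ∀ u, x ≤ u → u ≤ min (x + δ/2) b → |f u - f x| ≤ c/2 := by
    intro u h1 h2
    rcases eq_or_lt_of_le h1 with rfl | h1'
    · simp; linarith
    · have hd : dist u x < δ := by
        rw [Real.dist_eq, abs_of_pos (by linarith)]
        have := le_trans h2 (min_le_left _ _)
        linarith
      have := hδ' (Set.mem_Ioi.mpr h1') hd
      rw [Real.dist_eq] at this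
      linarith
  have hsum : ∀ i ∈ Finset.range n, max (f (t (i + 1)) - f (t i) - c) 0 = 0 := by
    intro i hi
    rw [Finset.mem_range] at hi
    have h1 : x ≤ t i := le_trans ht0 (tmono hinc 0 i (Nat.zero_le i) hi.le)
    have h1' : x ≤ t (i+1) := le_trans ht0 (tmono hinc 0 (i+1) (Nat.zero_le _) hi)
    have h2 : t (i+1) ≤ min (x + δ/2) b := le_trans (tmono hinc (i+1) n hi le_rfl) htn
    have h2' : t i ≤ min (x + δ/2) b := le_trans (tmono hinc i n hi.le le_rfl) htn
    have k1 := abs_le.mp (key (t i) h1 h2')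
    have k2 := abs_le.mp (key (t (i+1)) h1' h2)
    exact max_eq_right (by linarith [k1.1, k1.2, k2.1, k2.2])
  rw [Finset.sum_eq_zero hsum]

lemma left_local {f : ℝ → ℝ} {a b c : ℝ} (hc : 0 < c) {s : ℝ} (hs : s ∈ Set.Ioc a b)
    {L : ℝ} (hlt : Filter.Tendsto f (𝓝[<] s) (𝓝 L)) :
    ∃ x K, a ≤ x ∧ x < s ∧ Bnd f c x s K := by
  rw [Metric.tendsto_nhdsWithin_nhds] at hlt
  obtain ⟨δ, hδ, hδ'⟩ := hlt (c/2) (by linarith)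
  refine ⟨max a (s - δ/2), |f s| + 2 * |L| + c, le_max_left _ _,
    max_lt hs.1 (by linarith), ?_⟩
  intro n t ht0 hinc htn
  have key : ∀ u, max a (s - δ/2) ≤ u → u < s → |f u - L| ≤ c/2 := by
    intro u h1 h2
    have hd : dist u s < δ := by
      rw [Real.dist_eq, abs_of_neg (by linarith)]
      have := le_trans (le_max_right a (s - δ/2)) h1
      linarith
    have := hδ' (Set.mem_Iio.mpr h2) hd
    rw [Real.dist_eq] at this
    linarith
  rcases Nat.eq_zero_or_pos n with rfl | hn
  · simp
    positivity
  obtain ⟨m, rfl⟩ : ∃ m, n = m + 1 := ⟨n - 1, by omega⟩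
  rw [Finset.sum_range_succ]
  have hzero : ∀ i ∈ Finset.range m, max (f (t (i + 1)) - f (t i) - c) 0 = 0 := by
    intro i hi
    rw [Finset.mem_range] at hi
    have h1 : max a (s - δ/2) ≤ t i := le_trans ht0 (tmono hinc 0 i (Nat.zero_le i) (by omega))
    have h1' : max a (s - δ/2) ≤ t (i+1) := le_trans ht0 (tmono hinc 0 (i+1) (Nat.zero_le _) (by omega))
    have h2' : t (i+1) < s := lt_of_le_of_lt (tmono hinc (i+1) m (by omega) (by omega))
      (lt_of_lt_of_le (hinc m (by omega)) htn)
    have h2 : t i < s := lt_trans (hinc i (by omega)) h2'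
    have k1 := abs_le.mp (key (t i) h1 h2)
    have k2 := abs_le.mp (key (t (i+1)) h1' h2')
    exact max_eq_right (by linarith [k1.1, k1.2, k2.1, k2.2])
  rw [Finset.sum_eq_zero hzero, zero_add]
  have h1 : max a (s - δ/2) ≤ t m := le_trans ht0 (tmono hinc 0 m (Nat.zero_le m) (by omega))
  have h2 : t m < s := lt_of_lt_of_le (hinc m (by omega)) htn
  have k1 := abs_le.mp (key (t m) h1 h2)
  have habsL : -|L| ≤ L ∧ L ≤ |L| := ⟨neg_abs_le L, le_abs_self L⟩
  apply max_le _ (by positivity)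
  rcases eq_or_lt_of_le htn with he | hlt'
  · -- t (m+1) = s
    rw [he]
    have hfs := le_abs_self (f s)
    linarith [k1.1, k1.2, habsL.1, habsL.2]
  · -- t (m+1) < s
    have h1' : max a (s - δ/2) ≤ t (m+1) := le_trans h1 (hinc m (by omega)).le
    have k2 := abs_le.mp (key (t (m+1)) h1' hlt')
    have : (0:ℝ) ≤ |f s| := abs_nonneg _
    linarith [k1.1, k1.2, k2.1, k2.2, habsL.1, habsL.2]

lemma bnd_exists {f : ℝ → ℝ} {a b : ℝ} (hab : a < b) (hf : CadlagOn f a b)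
    {c : ℝ} (hc : 0 < c) : ∃ M, Bnd f c a b M := by
  classical
  set A : Set ℝ := {x | x ∈ Set.Icc a b ∧ ∃ M, Bnd f c a x M} with hA
  have haA : a ∈ A := ⟨⟨le_rfl, hab.le⟩, 0, bnd_self f c a⟩
  have hne : A.Nonempty := ⟨a, haA⟩
  have hbdd : BddAbove A := ⟨b, fun x hx => hx.1.2⟩
  set s := sSup A with hsdef
  have has : a ≤ s := le_csSup hbdd haA
  have hsb : s ≤ b := csSup_le hne (fun x hx => hx.1.2)
  have hsA : s ∈ A := by
    rcases eq_or_lt_of_le has with he | has'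
    · rw [← he]; exact haA
    · obtain ⟨L, hL⟩ := hf.2 s ⟨has', hsb⟩
      obtain ⟨x, K, hax, hxs, hbnd⟩ := left_local hc ⟨has', hsb⟩ hL
      obtain ⟨x', hx'A, hxx'⟩ := exists_lt_of_lt_csSup hne (show x < sSup A from hsdef ▸ hxs)
      have hx's : x' ≤ s := le_csSup hbdd hx'A
      obtain ⟨⟨hax', _⟩, M₁, hM₁⟩ := hx'A
      rcases eq_or_lt_of_le hx's with he | hx's'
      · rw [← he]; exact ⟨⟨hax', he ▸ hsb⟩, M₁, hM₁⟩
      · have hbnd' : Bnd f c x' s K := hbnd.mono_left hxx'.le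
        exact ⟨⟨has, hsb⟩, M₁ + K + c, Bnd.split hc.le hax' hx's'.le hM₁ hbnd'⟩
  rcases eq_or_lt_of_le hsb with he | hsb'
  · obtain ⟨_, M, hM⟩ := hsA
    exact ⟨M, he ▸ hM⟩
  · exfalso
    obtain ⟨y, hsy, hyb, hbnd⟩ := right_local hc ⟨has, hsb'⟩ (hf.1 s ⟨has, hsb'⟩)
    obtain ⟨_, M, hM⟩ := hsA
    have hyA : y ∈ A := ⟨⟨le_trans has hsy.le, hyb⟩, M + 0 + c,
      Bnd.split hc.le has hsy.le hM hbnd⟩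
    have hle : y ≤ s := le_csSup hbdd hyA
    linarith

end UTVAux

lemma upTruncVar_le_ofReal {f : ℝ → ℝ} {a b c M : ℝ} (h : UTVAux.Bnd f c a b M) :
    upTruncVar f a b c ≤ ENNReal.ofReal M := by
  rw [upTruncVar]
  refine iSup_le fun n => iSup_le fun t => iSup_le fun h0 => iSup_le fun hinc =>
    iSup_le fun hn => ?_
  rw [← ENNReal.ofReal_sum_of_nonneg (fun i _ => le_max_right _ _)]
  exact ENNReal.ofReal_le_ofReal (h n t h0 hinc hn)

lemma le_upTruncVar {f : ℝ → ℝ} {a b c : ℝ} {n : ℕ} {t : ℕ → ℝ}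
    (h0 : a ≤ t 0) (hinc : ∀ i < n, t i < t (i + 1)) (hn : t n ≤ b) :
    ENNReal.ofReal (∑ i ∈ Finset.range n, max (f (t (i + 1)) - f (t i) - c) 0)
      ≤ upTruncVar f a b c := by
  rw [ENNReal.ofReal_sum_of_nonneg (fun i _ => le_max_right _ _), upTruncVar]
  exact le_iSup_of_le n (le_iSup_of_le t (le_iSup_of_le h0 (le_iSup_of_le hinc
    (le_iSup_of_le hn le_rfl))))

lemma max_comb {u v p q d : ℝ} (hu : 0 ≤ u) (hv : 0 ≤ v) (huv : u + v = 1) :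
    max (d - (u * p + v * q)) 0 ≤ u * max (d - p) 0 + v * max (d - q) 0 := by
  have h1 : u * (d - p) ≤ u * max (d - p) 0 := mul_le_mul_of_nonneg_left (le_max_left _ _) hu
  have h2 : v * (d - q) ≤ v * max (d - q) 0 := mul_le_mul_of_nonneg_left (le_max_left _ _) hv
  have h3 : 0 ≤ u * max (d - p) 0 := mul_nonneg hu (le_max_right _ _)
  have h4 : 0 ≤ v * max (d - q) 0 := mul_nonneg hv (le_max_right _ _)
  have hd : u * d + v * d = d := by rw [← add_mul, huv, one_mul]
  apply max_le _ (by linarith)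
  nlinarith [h1, h2]

/-- `c ↦ UTV^c(f,[a,b])` is finite, nonincreasing, convex and continuous on `(0,∞)`. -/
theorem upTruncVar_antitone_convex_continuous_in_c
    (a b : ℝ) (hab : a < b) (f : ℝ → ℝ) (hf : CadlagOn f a b) :
    (∀ c ∈ Set.Ioi (0 : ℝ), upTruncVar f a b c < ⊤) ∧
    AntitoneOn (fun c => (upTruncVar f a b c).toReal) (Set.Ioi 0) ∧
    ConvexOn ℝ (Set.Ioi 0) (fun c => (upTruncVar f a b c).toReal) ∧
    ContinuousOn (fun c => (upTruncVar f a b c).toReal) (Set.Ioi 0) := by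
  have hfin : ∀ c ∈ Set.Ioi (0 : ℝ), upTruncVar f a b c < ⊤ := by
    intro c hc
    obtain ⟨M, hM⟩ := UTVAux.bnd_exists hab hf (Set.mem_Ioi.mp hc)
    exact lt_of_le_of_lt (upTruncVar_le_ofReal hM) ENNReal.ofReal_lt_top
  set S : ℝ → ℝ := fun c => (upTruncVar f a b c).toReal with hS
  have hSnn : ∀ c, 0 ≤ S c := fun c => ENNReal.toReal_nonneg
  have hlow : ∀ c ∈ Set.Ioi (0 : ℝ), ∀ n : ℕ, ∀ t : ℕ → ℝ, a ≤ t 0 →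
      (∀ i < n, t i < t (i + 1)) → t n ≤ b →
      ∑ i ∈ Finset.range n, max (f (t (i + 1)) - f (t i) - c) 0 ≤ S c := by
    intro c hc n t h0 hinc hn
    have h1 := le_upTruncVar (f := f) (c := c) h0 hinc hn
    have h2 := ENNReal.toReal_mono (ne_of_lt (hfin c hc)) h1
    rwa [ENNReal.toReal_ofReal (Finset.sum_nonneg fun i _ => le_max_right _ _)] at h2
  have hup : ∀ c M : ℝ, 0 ≤ M → UTVAux.Bnd f c a b M → S c ≤ M :=
    fun c M hM h => ENNReal.toReal_le_of_le_ofReal hM (upTruncVar_le_ofReal h)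
  have hanti : AntitoneOn S (Set.Ioi 0) := by
    intro c hc d hd hcd
    apply hup d (S c) (hSnn c)
    intro n t h0 hinc hn
    calc ∑ i ∈ Finset.range n, max (f (t (i + 1)) - f (t i) - d) 0
        ≤ ∑ i ∈ Finset.range n, max (f (t (i + 1)) - f (t i) - c) 0 := by
          apply Finset.sum_le_sum
          intro i _
          exact max_le_max (by linarith) le_rfl
      _ ≤ S c := hlow c hc n t h0 hinc hn
  have hconv : ConvexOn ℝ (Set.Ioi 0) S := by
    refine ⟨convex_Ioi 0, ?_⟩
    intro p hp q hq u v hu hv huv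
    simp only [smul_eq_mul]
    have hp' : (0:ℝ) < p := Set.mem_Ioi.mp hp
    have hq' : (0:ℝ) < q := Set.mem_Ioi.mp hq
    have hmem : (0:ℝ) < u * p + v * q := by
      have n1 : 0 ≤ u * p := mul_nonneg hu hp'.le
      have n2 : 0 ≤ v * q := mul_nonneg hv hq'.le
      rcases le_or_gt u (1/2) with h | h
      · have : (1/2 : ℝ) * q ≤ v * q :=
          mul_le_mul_of_nonneg_right (by linarith) hq'.le
        linarith
      · have : (1/2 : ℝ) * p ≤ u * p :=
          mul_le_mul_of_nonneg_right (by linarith) hp'.le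
        linarith
    have hM : 0 ≤ u * S p + v * S q :=
      add_nonneg (mul_nonneg hu (hSnn p)) (mul_nonneg hv (hSnn q))
    apply hup _ _ hM
    intro n t h0 hinc hn
    calc ∑ i ∈ Finset.range n, max (f (t (i + 1)) - f (t i) - (u * p + v * q)) 0
        ≤ ∑ i ∈ Finset.range n,
            (u * max (f (t (i + 1)) - f (t i) - p) 0 + v * max (f (t (i + 1)) - f (t i) - q) 0) :=
          Finset.sum_le_sum fun i _ => max_comb hu hv huv
      _ = u * (∑ i ∈ Finset.range n, max (f (t (i + 1)) - f (t i) - p) 0)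
          + v * (∑ i ∈ Finset.range n, max (f (t (i + 1)) - f (t i) - q) 0) := by
          rw [Finset.sum_add_distrib, Finset.mul_sum, Finset.mul_sum]
      _ ≤ u * S p + v * S q := by
          have l1 := hlow p hp n t h0 hinc hn
          have l2 := hlow q hq n t h0 hinc hn
          have := mul_le_mul_of_nonneg_left l1 hu
          have := mul_le_mul_of_nonneg_left l2 hv
          linarith
  exact ⟨hfin, hanti, hconv, hconv.continuousOn isOpen_Ioi⟩
end

section
/- Let a < b and let f : [a,b] → ℝ be càdlàg on [a,b]. Then the function (0,∞) ∋ c ↦ TV^c(f,[a,b]) ∈ [0,∞) is nonincreasing, convex, and continuous on (0,∞). -/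
open Set Filter Topology ENNReal

lemma le_truncVar (f : ℝ → ℝ) (a b c : ℝ) (n : ℕ) (t : ℕ → ℝ) (h1 : a ≤ t 0)
    (h2 : ∀ i < n, t i < t (i + 1)) (h3 : t n ≤ b) :
    ∑ i ∈ Finset.range n, ENNReal.ofReal (max (|f (t (i + 1)) - f (t i)| - c) 0)
      ≤ truncVar f a b c := by
  rw [truncVar]
  exact le_iSup_of_le n (le_iSup_of_le t (le_iSup_of_le h1 (le_iSup_of_le h2
    (le_iSup_of_le h3 le_rfl))))

lemma truncVar_anti (f : ℝ → ℝ) (a b : ℝ) {c₁ c₂ : ℝ} (h : c₁ ≤ c₂) :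
    truncVar f a b c₂ ≤ truncVar f a b c₁ := by
  rw [truncVar]
  refine iSup_le fun n => iSup_le fun t => iSup_le fun h1 => iSup_le fun h2 =>
    iSup_le fun h3 => le_trans ?_ (le_truncVar f a b c₁ n t h1 h2 h3)
  refine Finset.sum_le_sum fun i _ => ENNReal.ofReal_le_ofReal ?_
  exact max_le_max (by linarith) le_rfl

lemma exists_osc_partition (f : ℝ → ℝ) (a b : ℝ) (hab : a ≤ b) (hf : CadlagOn f a b)
    {ε : ℝ} (hε : 0 < ε) :
    ∃ n : ℕ, ∃ s : ℕ → ℝ, s 0 = a ∧ s n = b ∧ (∀ i < n, s i < s (i + 1)) ∧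
      ∀ i < n, ∀ p ∈ Ico (s i) (s (i + 1)), ∀ q ∈ Ico (s i) (s (i + 1)), |f p - f q| < ε := by
  set A : Set ℝ := {x | x ∈ Icc a b ∧ ∃ n : ℕ, ∃ s : ℕ → ℝ, s 0 = a ∧ s n = x ∧
      (∀ i < n, s i < s (i + 1)) ∧
      ∀ i < n, ∀ p ∈ Ico (s i) (s (i + 1)), ∀ q ∈ Ico (s i) (s (i + 1)), |f p - f q| < ε} with hA
  have haA : a ∈ A := by
    refine ⟨⟨le_refl a, hab⟩, 0, fun _ => a, rfl, rfl, by omega, by omega⟩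
  have hbdd : BddAbove A := ⟨b, fun x hx => hx.1.2⟩
  have hne : A.Nonempty := ⟨a, haA⟩
  set u := sSup A with hu
  have hau : a ≤ u := le_csSup hbdd haA
  have hub : u ≤ b := csSup_le hne (fun x hx => hx.1.2)
  -- extension helper
  have hext : ∀ x ∈ A, ∀ v : ℝ, x < v → v ≤ b →
      (∀ p ∈ Ico x v, ∀ q ∈ Ico x v, |f p - f q| < ε) → v ∈ A := by
    rintro x ⟨hx1, n, s, hs0, hsn, hmono, hosc⟩ v hxv hvb hoscv
    refine ⟨⟨hx1.1.trans hxv.le, hvb⟩, n + 1, fun i => if i < n + 1 then s i else v, ?_, ?_, ?_, ?_⟩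
    · simp [hs0]
    · simp
    · intro i hi
      rcases Nat.lt_or_ge i n with h | h
      · simpa [Nat.lt_of_lt_of_le h (Nat.le_succ n), Nat.succ_lt_succ h] using hmono i h
      · have hin : i = n := by omega
        simp only [hin, Nat.lt_succ_self, if_pos, lt_irrefl, if_neg]
        simpa [hsn] using hxv
    · intro i hi p hp q hq
      dsimp only at hp hq
      rcases Nat.lt_or_ge i n with h | h
      · rw [if_pos (Nat.lt_of_lt_of_le h (Nat.le_succ n)), if_pos (Nat.succ_lt_succ h)] at hp hq
        exact hosc i h p hp q hq
      · have hin : i = n := by omega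
        rw [hin] at hp hq
        rw [if_pos (Nat.lt_succ_self n), if_neg (lt_irrefl (n + 1)), hsn] at hp hq
        exact hoscv p hp q hq
  have huA : u ∈ A := by
    rcases eq_or_lt_of_le hau with h | h
    · rwa [← h]
    · obtain ⟨L, hL⟩ := hf.2 u ⟨h, hub⟩
      rw [Metric.tendsto_nhdsWithin_nhds] at hL
      obtain ⟨δ, hδ, hLδ⟩ := hL (ε / 2) (by linarith)
      have hlt : max (u - δ) a < u := by
        rw [max_lt_iff]; exact ⟨by linarith, h⟩
      obtain ⟨x, hxA, hxgt⟩ := exists_lt_of_lt_csSup hne hlt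
      have hxu : x ≤ u := le_csSup hbdd hxA
      rcases eq_or_lt_of_le hxu with h2 | h2
      · rwa [← h2]
      · refine hext x hxA u h2 hub ?_
        have h3 : u - δ < x := lt_of_le_of_lt (le_max_left _ _) hxgt
        have key : ∀ p ∈ Ico x u, |f p - L| < ε / 2 := by
          intro p hp
          have : dist (f p) L < ε / 2 := by
            refine hLδ (show p < u from hp.2) ?_
            rw [Real.dist_eq, abs_of_nonpos (by linarith [hp.2])]
            linarith [hp.1]
          rwa [Real.dist_eq] at this
        intro p hp q hq
        have t1 := abs_sub_le (f p) L (f q)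
        rw [abs_sub_comm L (f q)] at t1
        have := key p hp; have := key q hq
        calc |f p - f q| ≤ |f p - L| + |f q - L| := t1
          _ < ε / 2 + ε / 2 := by linarith
          _ = ε := by ring
  rcases eq_or_lt_of_le hub with h | h
  · obtain ⟨_, n, s, h0, hn, hm, ho⟩ := huA
    exact ⟨n, s, h0, by rw [hn, h], hm, ho⟩
  · exfalso
    have hrc := hf.1 u ⟨hau, h⟩
    rw [Metric.tendsto_nhdsWithin_nhds] at hrc
    obtain ⟨δ, hδ, hδ2⟩ := hrc (ε / 2) (by linarith)
    set v := min (u + δ / 2) b with hv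
    have huv : u < v := by
      simp only [hv, lt_min_iff]; constructor <;> linarith
    have hvb : v ≤ b := min_le_right _ _
    have hvA : v ∈ A := by
      refine hext u huA v huv hvb ?_
      have key : ∀ p ∈ Ico u v, |f p - f u| < ε / 2 := by
        intro p hp
        rcases eq_or_lt_of_le hp.1 with h2 | h2
        · rw [← h2]; simpa using (by linarith : (0:ℝ) < ε / 2)
        · have : dist (f p) (f u) < ε / 2 := by
            refine hδ2 (show p ∈ Ioi u from h2) ?_
            rw [Real.dist_eq, abs_of_nonneg (by linarith)]
            have := lt_of_lt_of_le hp.2 (min_le_left _ _)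
            linarith
          rwa [Real.dist_eq] at this
      intro p hp q hq
      have t1 := abs_sub_le (f p) (f u) (f q)
      rw [abs_sub_comm (f u) (f q)] at t1
      have := key p hp; have := key q hq
      calc |f p - f q| ≤ |f p - f u| + |f q - f u| := t1
        _ < ε / 2 + ε / 2 := by linarith
        _ = ε := by ring
    have := le_csSup hbdd hvA
    linarith

lemma mono_of_step {t : ℕ → ℝ} {m : ℕ} (ht : ∀ i < m, t i < t (i + 1)) :
    ∀ i j, i ≤ j → j ≤ m → t i ≤ t j := by
  intro i j hij hjm
  induction j with
  | zero => simp_all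
  | succ k ih =>
    rcases Nat.lt_or_ge i (k + 1) with h | h
    · have h1 : t i ≤ t k := ih (by omega) (by omega)
      have h2 : t k < t (k + 1) := ht k (by omega)
      linarith
    · have : i = k + 1 := by omega
      rw [this]

lemma truncVar_lt_top' (f : ℝ → ℝ) (a b : ℝ) (hab : a ≤ b)
    {c : ℝ} (hc : 0 < c)
    (n : ℕ) (s : ℕ → ℝ) (hs0 : s 0 = a) (hsn : s n = b) (hmono : ∀ i < n, s i < s (i + 1))
    (hosc : ∀ i < n, ∀ p ∈ Ico (s i) (s (i + 1)), ∀ q ∈ Ico (s i) (s (i + 1)), |f p - f q| < c) :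
    truncVar f a b c < ⊤ := by
  -- location
  have hloc : ∀ x ∈ Icc a b, x = b ∨ ∃ j < n, x ∈ Ico (s j) (s (j + 1)) := by
    intro x hx
    rcases eq_or_lt_of_le hx.2 with h | h
    · exact Or.inl h
    · right
      classical
      have hP0 : s 0 ≤ x := hs0 ▸ hx.1
      set j := Nat.findGreatest (fun j => s j ≤ x) n with hj
      have hspec : s j ≤ x := by
        rw [hj]; exact Nat.findGreatest_spec (P := fun j => s j ≤ x) (Nat.zero_le n) hP0
      have hjn : j ≤ n := Nat.findGreatest_le n
      have hjlt : j < n := by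
        rcases eq_or_lt_of_le hjn with h2 | h2
        · exfalso; rw [h2, hsn] at hspec; linarith
        · exact h2
      refine ⟨j, hjlt, hspec, ?_⟩
      by_contra hcon
      push_neg at hcon
      exact Nat.findGreatest_is_greatest (P := fun j => s j ≤ x)
        (hj ▸ Nat.lt_succ_self j) (by omega) hcon
  -- bound
  set S : ℝ := (∑ j ∈ Finset.range (n + 1), |f (s j)|) with hS
  set B : ℝ := S + c with hB
  have hfs : ∀ j ≤ n, |f (s j)| ≤ S := by
    intro j hj
    exact Finset.single_le_sum (f := fun k => |f (s k)|) (fun k _ => abs_nonneg _)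
      (Finset.mem_range.2 (Nat.lt_succ_of_le hj))
  have hbdd : ∀ x ∈ Icc a b, |f x| ≤ B := by
    intro x hx
    rcases hloc x hx with h | ⟨j, hjn, hxj⟩
    · rw [h, ← hsn]; have := hfs n le_rfl; linarith
    · have hsj : s j ∈ Ico (s j) (s (j + 1)) := ⟨le_rfl, hmono j hjn⟩
      have := hosc j hjn x hxj (s j) hsj
      have h2 := hfs j hjn.le
      have := abs_sub_abs_le_abs_sub (f x) (f (s j))
      linarith
  have hBpos : 0 ≤ B := le_trans (abs_nonneg (f (s 0))) (by linarith [hfs 0 (Nat.zero_le n)])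
  -- bound each partition sum
  have key : truncVar f a b c ≤ (n : ℝ≥0∞) * ENNReal.ofReal (2 * B) := by
    rw [truncVar]
    refine iSup_le fun m => iSup_le fun t => iSup_le fun h0 => iSup_le fun hmt =>
      iSup_le fun hm => ?_
    classical
    have htmem : ∀ i ≤ m, t i ∈ Icc a b :=
      fun i hi => ⟨le_trans h0 (mono_of_step hmt 0 i (Nat.zero_le i) hi),
        le_trans (mono_of_step hmt i m hi le_rfl) hm⟩
    set bad := (Finset.range m).filter (fun i => c < |f (t (i + 1)) - f (t i)|) with hbad
    have hsummeq : ∑ i ∈ Finset.range m, ENNReal.ofReal (max (|f (t (i + 1)) - f (t i)| - c) 0)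
        = ∑ i ∈ bad, ENNReal.ofReal (max (|f (t (i + 1)) - f (t i)| - c) 0) := by
      refine (Finset.sum_subset (Finset.filter_subset _ _) ?_).symm
      intro i hi hni
      have : ¬ c < |f (t (i + 1)) - f (t i)| := by
        intro h; exact hni (Finset.mem_filter.2 ⟨hi, h⟩)
      push_neg at this
      rw [max_eq_right (by linarith), ENNReal.ofReal_zero]
    have hcross : ∀ i, ∃ j, i ∈ bad → j ∈ Finset.Icc 1 n ∧ t i < s j ∧ s j ≤ t (i + 1) := by
      intro i
      by_cases hib : i ∈ bad
      · obtain ⟨hir, hic⟩ := Finset.mem_filter.1 hib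
        have him : i < m := Finset.mem_range.1 hir
        have hti1 : t i < t (i + 1) := hmt i him
        have hti1b : t (i + 1) ≤ b := (htmem (i + 1) (by omega)).2
        have htib : t i < b := lt_of_lt_of_le hti1 hti1b
        rcases hloc (t i) (htmem i him.le) with h | ⟨j, hjn, hxj⟩
        · exact absurd h (ne_of_lt htib)
        · refine ⟨j + 1, fun _ => ⟨Finset.mem_Icc.2 ⟨by omega, by omega⟩, hxj.2, ?_⟩⟩
          by_contra hcon
          push_neg at hcon
          have h1 : t (i + 1) ∈ Ico (s j) (s (j + 1)) := ⟨le_trans hxj.1 hti1.le, hcon⟩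
          have := hosc j hjn (t (i + 1)) h1 (t i) hxj
          linarith
      · exact ⟨0, fun h => absurd h hib⟩
    choose φ hφ using hcross
    have hcard : bad.card ≤ (Finset.Icc 1 n).card := by
      refine Finset.card_le_card_of_injOn φ (fun i hi => (hφ i hi).1) ?_
      intro i hi i' hi' heq
      by_contra hne
      have key2 : ∀ p q, p ∈ bad → q ∈ bad → p < q → s (φ p) < s (φ q) := by
        intro p q hp hq hpq
        have h1 := (hφ p hp).2.2
        have h2 := (hφ q hq).2.1
        have hm1 : p + 1 ≤ q := hpq
        have : t (p + 1) ≤ t q := mono_of_step hmt (p + 1) q hm1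
          (Finset.mem_range.1 (Finset.mem_filter.1 hq).1).le
        linarith
      rcases lt_trichotomy i i' with h | h | h
      · have := key2 i i' hi hi' h; rw [heq] at this; exact lt_irrefl _ this
      · exact hne h
      · have := key2 i' i hi' hi h; rw [heq] at this; exact lt_irrefl _ this
    have hterm : ∀ i ∈ bad, ENNReal.ofReal (max (|f (t (i + 1)) - f (t i)| - c) 0)
        ≤ ENNReal.ofReal (2 * B) := by
      intro i hi
      have him : i < m := Finset.mem_range.1 (Finset.mem_filter.1 hi).1
      have h1 := hbdd (t i) (htmem i him.le)
      have h2 := hbdd (t (i + 1)) (htmem (i + 1) (by omega))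
      refine ENNReal.ofReal_le_ofReal ?_
      have habs : |f (t (i + 1)) - f (t i)| ≤ 2 * B := by
        have := abs_sub (f (t (i + 1))) (f (t i))
        calc |f (t (i + 1)) - f (t i)| ≤ |f (t (i + 1))| + |f (t i)| := abs_sub _ _
          _ ≤ 2 * B := by linarith
      refine max_le (by linarith) (by linarith)
    calc ∑ i ∈ Finset.range m, ENNReal.ofReal (max (|f (t (i + 1)) - f (t i)| - c) 0)
        = ∑ i ∈ bad, ENNReal.ofReal (max (|f (t (i + 1)) - f (t i)| - c) 0) := hsummeq
      _ ≤ ∑ _i ∈ bad, ENNReal.ofReal (2 * B) := Finset.sum_le_sum hterm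
      _ = (bad.card : ℝ≥0∞) * ENNReal.ofReal (2 * B) := by
          rw [Finset.sum_const, nsmul_eq_mul]
      _ ≤ (n : ℝ≥0∞) * ENNReal.ofReal (2 * B) := by
          refine mul_le_mul_left ?_ _
          exact_mod_cast le_trans hcard (by simp [Nat.card_Icc])
    -- done
  exact lt_of_le_of_lt key (by
    refine ENNReal.mul_lt_top ?_ ?_
    · exact ENNReal.natCast_lt_top n
    · exact ENNReal.ofReal_lt_top)

/-- `c ↦ TV^c(f,[a,b])` is finite, nonincreasing, convex and continuous on `(0,∞)`. -/
theorem truncVar_antitone_convex_continuous_in_c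
    (a b : ℝ) (hab : a < b) (f : ℝ → ℝ) (hf : CadlagOn f a b) :
    (∀ c ∈ Set.Ioi (0 : ℝ), truncVar f a b c < ⊤) ∧
    AntitoneOn (fun c => (truncVar f a b c).toReal) (Set.Ioi 0) ∧
    ConvexOn ℝ (Set.Ioi 0) (fun c => (truncVar f a b c).toReal) ∧
    ContinuousOn (fun c => (truncVar f a b c).toReal) (Set.Ioi 0) := by
  have hfin : ∀ c ∈ Set.Ioi (0 : ℝ), truncVar f a b c < ⊤ := by
    intro c hc
    obtain ⟨n, s, h0, hn, hm, ho⟩ := exists_osc_partition f a b hab.le hf hc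
    exact truncVar_lt_top' f a b hab.le hc n s h0 hn hm ho
  have hanti : AntitoneOn (fun c => (truncVar f a b c).toReal) (Set.Ioi 0) := by
    intro c₁ h₁ c₂ h₂ h12
    exact (ENNReal.toReal_le_toReal (hfin c₂ h₂).ne (hfin c₁ h₁).ne).2
      (truncVar_anti f a b h12)
  have hconv : ConvexOn ℝ (Set.Ioi 0) (fun c => (truncVar f a b c).toReal) := by
    refine ⟨convex_Ioi 0, ?_⟩
    intro c₁ h₁ c₂ h₂ θ₁ θ₂ hθ₁ hθ₂ hsum
    simp only [smul_eq_mul]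
    have hg1 : (0:ℝ) ≤ (truncVar f a b c₁).toReal := ENNReal.toReal_nonneg
    have hg2 : (0:ℝ) ≤ (truncVar f a b c₂).toReal := ENNReal.toReal_nonneg
    have hkey : truncVar f a b (θ₁ * c₁ + θ₂ * c₂) ≤
        ENNReal.ofReal (θ₁ * (truncVar f a b c₁).toReal + θ₂ * (truncVar f a b c₂).toReal) := by
      rw [truncVar]
      refine iSup_le fun n => iSup_le fun t => iSup_le fun ha1 => iSup_le fun ha2 =>
        iSup_le fun ha3 => ?_
      rw [← ENNReal.ofReal_sum_of_nonneg (fun i _ => le_max_right _ 0)]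
      refine ENNReal.ofReal_le_ofReal ?_
      have hterm : ∀ i ∈ Finset.range n,
          max (|f (t (i + 1)) - f (t i)| - (θ₁ * c₁ + θ₂ * c₂)) 0 ≤
            θ₁ * max (|f (t (i + 1)) - f (t i)| - c₁) 0 +
            θ₂ * max (|f (t (i + 1)) - f (t i)| - c₂) 0 := by
        intro i _
        set D := |f (t (i + 1)) - f (t i)|
        have hpos : (0:ℝ) ≤ θ₁ * max (D - c₁) 0 + θ₂ * max (D - c₂) 0 := by
          have := le_max_right (D - c₁) 0
          have := le_max_right (D - c₂) 0
          nlinarith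
        refine max_le ?_ hpos
        have e : D - (θ₁ * c₁ + θ₂ * c₂) = θ₁ * (D - c₁) + θ₂ * (D - c₂) := by
          linear_combination D * hsum.symm
        rw [e]
        exact add_le_add (mul_le_mul_of_nonneg_left (le_max_left _ _) hθ₁)
          (mul_le_mul_of_nonneg_left (le_max_left _ _) hθ₂)
      have hR : ∀ c' : ℝ, truncVar f a b c' ≠ ⊤ →
          ∑ i ∈ Finset.range n, max (|f (t (i + 1)) - f (t i)| - c') 0 ≤
            (truncVar f a b c').toReal := by
        intro c' hc'
        rw [← ENNReal.ofReal_le_iff_le_toReal hc',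
          ENNReal.ofReal_sum_of_nonneg (fun i _ => le_max_right _ 0)]
        exact le_truncVar f a b c' n t ha1 ha2 ha3
      have hR1 := hR c₁ (hfin c₁ h₁).ne
      have hR2 := hR c₂ (hfin c₂ h₂).ne
      calc ∑ i ∈ Finset.range n, max (|f (t (i + 1)) - f (t i)| - (θ₁ * c₁ + θ₂ * c₂)) 0
          ≤ ∑ i ∈ Finset.range n, (θ₁ * max (|f (t (i + 1)) - f (t i)| - c₁) 0 +
              θ₂ * max (|f (t (i + 1)) - f (t i)| - c₂) 0) := Finset.sum_le_sum hterm
        _ = θ₁ * ∑ i ∈ Finset.range n, max (|f (t (i + 1)) - f (t i)| - c₁) 0 +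
            θ₂ * ∑ i ∈ Finset.range n, max (|f (t (i + 1)) - f (t i)| - c₂) 0 := by
            rw [Finset.sum_add_distrib, Finset.mul_sum, Finset.mul_sum]
        _ ≤ θ₁ * (truncVar f a b c₁).toReal + θ₂ * (truncVar f a b c₂).toReal :=
            add_le_add (mul_le_mul_of_nonneg_left hR1 hθ₁)
              (mul_le_mul_of_nonneg_left hR2 hθ₂)
    exact ENNReal.toReal_le_of_le_ofReal
      (add_nonneg (mul_nonneg hθ₁ hg1) (mul_nonneg hθ₂ hg2)) hkey
  exact ⟨hfin, hanti, hconv, hconv.continuousOn isOpen_Ioi⟩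
end

section
/- Let a < b, let f : [a,b] → ℝ be càdlàg on [a,b], and let c > 0. Let T := inf { s ∈ [a,b] : sup_{t ∈ [a,s]} f(t) − f(s) ≥ c }, with T := b if this set is empty. Then for every s ∈ (a,b], UTV^c(f,[a,s]) = sup_{a ≤ t < u ≤ min(T,s)} max(f(u) − f(t) − c, 0) + UTV^c(f,[min(T,s), s]), where the supremum over an empty index set and UTV^c over a degenerate interval are both taken to be 0. -/
open Set Filter Topology ENNReal

open Classical in
/-- The first time in `[a,b]` at which `f` has dropped by at least `c` from its running
supremum, taken to be `b` if no such time exists. -/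
noncomputable def firstDownTime (f : ℝ → ℝ) (a b c : ℝ) : ℝ :=
  if {x ∈ Set.Icc a b | c ≤ sSup (f '' Set.Icc a x) - f x} = ∅ then b
  else sInf {x ∈ Set.Icc a b | c ≤ sSup (f '' Set.Icc a x) - f x}

/-! Before the first down time `T` the function never falls by `c` or more below its running
maximum, so in a partition of `[a, min T s]` consecutive truncated rises merge into one, and
`UTV^c(f, [a, min T s])` is the largest single truncated rise there. When `T < s`, the partition
step crossing `T` is split at `T`: as `f T` lies at least `c` below the running maximum at `T`, the
rise of that step is at most a rise ending by `T` plus the truncated rise starting at `T`. The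
reverse inequality is superadditivity of `UTV^c` under concatenation of partitions. -/

def IsPartition (a b : ℝ) (n : ℕ) (t : ℕ → ℝ) : Prop :=
  a ≤ t 0 ∧ (∀ i < n, t i < t (i + 1)) ∧ t n ≤ b

noncomputable def upTruncSum (f : ℝ → ℝ) (c : ℝ) (n : ℕ) (t : ℕ → ℝ) : ℝ≥0∞ :=
  ∑ i ∈ Finset.range n, ENNReal.ofReal (max (f (t (i + 1)) - f (t i) - c) 0)

noncomputable def truncRiseSup (f : ℝ → ℝ) (a m c : ℝ) : ℝ≥0∞ :=
  ⨆ (t : ℝ) (u : ℝ) (_ : a ≤ t) (_ : t < u) (_ : u ≤ m), ENNReal.ofReal (max (f u - f t - c) 0)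

def seqCons (x : ℝ) (t : ℕ → ℝ) : ℕ → ℝ
  | 0 => x
  | i + 1 => t i

def seqGlue (n : ℕ) (t r : ℕ → ℝ) (i : ℕ) : ℝ :=
  if i ≤ n then t i else r (i - n)

theorem seqGlue_of_le {n i : ℕ} {t r : ℕ → ℝ} (hi : i ≤ n) : seqGlue n t r i = t i :=
  if_pos hi

theorem seqGlue_of_ge {n i : ℕ} {t r : ℕ → ℝ} (h : t n = r 0) (hi : n ≤ i) :
    seqGlue n t r i = r (i - n) := by
  rcases hi.eq_or_lt with rfl | hi
  · rw [seqGlue_of_le le_rfl, h, Nat.sub_self]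
  · exact if_neg hi.not_ge

namespace IsPartition

variable {a b : ℝ} {n : ℕ} {t : ℕ → ℝ}

theorem strictMonoOn (ht : IsPartition a b n t) : StrictMonoOn t (Iic n) :=
  strictMonoOn_Iic_of_lt_succ fun i hi => by simpa using ht.2.1 i hi

theorem lt (ht : IsPartition a b n t) {i j : ℕ} (hij : i < j) (hj : j ≤ n) : t i < t j :=
  ht.strictMonoOn (mem_Iic.2 (hij.le.trans hj)) (mem_Iic.2 hj) hij

theorem le (ht : IsPartition a b n t) {i j : ℕ} (hij : i ≤ j) (hj : j ≤ n) : t i ≤ t j :=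
  ht.strictMonoOn.monotoneOn (mem_Iic.2 (hij.trans hj)) (mem_Iic.2 hj) hij

theorem mem_Icc (ht : IsPartition a b n t) {i : ℕ} (hi : i ≤ n) : t i ∈ Icc a b :=
  ⟨ht.1.trans (ht.le (Nat.zero_le i) hi), (ht.le hi le_rfl).trans ht.2.2⟩

theorem mem_Ico (ht : IsPartition a b n t) {i : ℕ} (hi : i < n) : t i ∈ Ico a b :=
  ⟨(ht.mem_Icc hi.le).1, (ht.lt hi le_rfl).trans_le ht.2.2⟩

theorem head (ht : IsPartition a b n t) {k : ℕ} (hk : k ≤ n) : IsPartition a (t k) k t :=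
  ⟨ht.1, fun i hi => ht.2.1 i (hi.trans_le hk), le_rfl⟩

theorem tail (ht : IsPartition a b n t) {k : ℕ} (hk : k ≤ n) :
    IsPartition (t k) b (n - k) (fun i => t (k + i)) :=
  ⟨le_rfl, fun i hi => ht.2.1 (k + i) (by omega), by
    show t (k + (n - k)) ≤ b
    rw [Nat.add_sub_cancel' hk]
    exact ht.2.2⟩

theorem cons {a' x : ℝ} (ht : IsPartition a' b n t) (hx : a ≤ x) (hxt : x < t 0) :
    IsPartition a b (n + 1) (seqCons x t) :=
  ⟨hx, fun | 0, _ => hxt | i + 1, hi => ht.2.1 i (by omega), ht.2.2⟩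

theorem glue {m m' : ℝ} {k : ℕ} {r : ℕ → ℝ} (ht : IsPartition a m n t)
    (hr : IsPartition m' b k r) (h : t n = r 0) : IsPartition a b (n + k) (seqGlue n t r) := by
  refine ⟨by rw [seqGlue_of_le (Nat.zero_le n)]; exact ht.1, fun i hi => ?_, ?_⟩
  · rcases lt_or_ge i n with hin | hin
    · rw [seqGlue_of_le hin.le, seqGlue_of_le hin]
      exact ht.2.1 i hin
    · rw [seqGlue_of_ge h hin, seqGlue_of_ge h (by omega), Nat.sub_add_comm hin]
      exact hr.2.1 _ (by omega)
  · rw [seqGlue_of_ge h (by omega), Nat.add_sub_cancel_left]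
    exact hr.2.2

theorem nonempty (hab : a ≤ b) : Nonempty {p : ℕ × (ℕ → ℝ) // IsPartition a b p.1 p.2} :=
  ⟨⟨(0, fun _ => a), le_rfl, fun _ hi => absurd hi (Nat.not_lt_zero _), hab⟩⟩

end IsPartition

section upTruncSum

variable {f : ℝ → ℝ} {c : ℝ}

theorem upTruncSum_add (k l : ℕ) (t : ℕ → ℝ) :
    upTruncSum f c (k + l) t = upTruncSum f c k t + upTruncSum f c l (fun i => t (k + i)) :=
  Finset.sum_range_add _ _ _

theorem upTruncSum_cons (n : ℕ) (x : ℝ) (t : ℕ → ℝ) :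
    upTruncSum f c (n + 1) (seqCons x t) =
      ENNReal.ofReal (max (f (t 0) - f x - c) 0) + upTruncSum f c n t := by
  rw [upTruncSum, Finset.sum_range_succ', add_comm]
  rfl

theorem upTruncSum_glue {n k : ℕ} {t r : ℕ → ℝ} (h : t n = r 0) :
    upTruncSum f c (n + k) (seqGlue n t r) = upTruncSum f c n t + upTruncSum f c k r := by
  rw [upTruncSum_add]
  congr 1
  · refine Finset.sum_congr rfl fun i hi => ?_
    rw [Finset.mem_range] at hi
    rw [seqGlue_of_le hi, seqGlue_of_le hi.le]
  · refine Finset.sum_congr rfl fun i _ => ?_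
    dsimp only
    rw [seqGlue_of_ge h (by omega), seqGlue_of_ge h (by omega), Nat.add_sub_cancel_left,
      Nat.add_sub_cancel_left]

theorem sum_eq_zero_or_le_rise {t : ℕ → ℝ} {n : ℕ}
    (hdown : ∀ i j, i ≤ j → j < n → f (t i) - f (t j) ≤ c) :
    ∑ i ∈ Finset.range n, max (f (t (i + 1)) - f (t i) - c) 0 = 0 ∨
      ∃ i j, i < j ∧ j ≤ n ∧
        ∑ i ∈ Finset.range n, max (f (t (i + 1)) - f (t i) - c) 0 ≤ f (t j) - f (t i) - c := by
  induction n with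
  | zero => simp
  | succ n ih =>
    have ih := ih fun i j hij hj => hdown i j hij (by omega)
    rw [Finset.sum_range_succ]
    rcases le_or_gt (f (t (n + 1)) - f (t n) - c) 0 with hstep | hstep
    · rw [max_eq_right hstep, add_zero]
      exact ih.imp_right fun ⟨i, j, hij, hj, h⟩ => ⟨i, j, hij, by omega, h⟩
    · rw [max_eq_left hstep.le]
      right
      rcases ih with h | ⟨i, j, hij, hj, h⟩
      · exact ⟨n, n + 1, by omega, le_rfl, by rw [h, zero_add]⟩
      · -- the fall from `t j` to `t n` is at most `c`, so the two rises merge into one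
        exact ⟨i, n + 1, by omega, le_rfl, by linarith [hdown j n hj (by omega)]⟩

theorem upTruncSum_eq_zero_or_le_rise {t : ℕ → ℝ} {n : ℕ}
    (hdown : ∀ i j, i ≤ j → j < n → f (t i) - f (t j) ≤ c) :
    upTruncSum f c n t = 0 ∨
      ∃ i j, i < j ∧ j ≤ n ∧ upTruncSum f c n t ≤ ENNReal.ofReal (f (t j) - f (t i) - c) := by
  rw [upTruncSum, ← ENNReal.ofReal_sum_of_nonneg fun _ _ => le_max_right _ _]
  exact (sum_eq_zero_or_le_rise hdown).imp (fun h => by rw [h, ENNReal.ofReal_zero])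
    fun ⟨i, j, hij, hj, h⟩ => ⟨i, j, hij, hj, ENNReal.ofReal_le_ofReal h⟩

end upTruncSum

section upTruncVar

variable {f : ℝ → ℝ} {a b c : ℝ}

theorem upTruncVar_eq_iSup :
    upTruncVar f a b c =
      ⨆ p : {p : ℕ × (ℕ → ℝ) // IsPartition a b p.1 p.2}, upTruncSum f c p.1.1 p.1.2 := by
  simp only [upTruncVar, iSup_subtype, iSup_prod, IsPartition, iSup_and]
  rfl

theorem upTruncSum_le_upTruncVar {n : ℕ} {t : ℕ → ℝ} (ht : IsPartition a b n t) :
    upTruncSum f c n t ≤ upTruncVar f a b c := by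
  rw [upTruncVar_eq_iSup]
  exact le_iSup_of_le (ι := {p : ℕ × (ℕ → ℝ) // IsPartition a b p.1 p.2}) ⟨(n, t), ht⟩ le_rfl

theorem upTruncVar_le {X : ℝ≥0∞}
    (h : ∀ n t, IsPartition a b n t → upTruncSum f c n t ≤ X) : upTruncVar f a b c ≤ X := by
  rw [upTruncVar_eq_iSup]
  exact iSup_le fun p => h _ _ p.2

theorem upTruncVar_add_le {m s : ℝ} (ham : a ≤ m) (hms : m ≤ s) :
    upTruncVar f a m c + upTruncVar f m s c ≤ upTruncVar f a s c := by
  have := IsPartition.nonempty ham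
  have := IsPartition.nonempty hms
  rw [upTruncVar_eq_iSup (b := m), upTruncVar_eq_iSup (a := m)]
  refine ENNReal.iSup_add_iSup_le fun ⟨(n, t), ht⟩ ⟨(k, r), hr⟩ => ?_
  rcases (ht.2.2.trans hr.1).eq_or_lt with h | h
  · rw [← upTruncSum_glue h]
    exact upTruncSum_le_upTruncVar (ht.glue hr h)
  · calc upTruncSum f c n t + upTruncSum f c k r
        ≤ upTruncSum f c n t + upTruncSum f c (k + 1) (seqCons (t n) r) := by
          rw [upTruncSum_cons]
          gcongr
          exact le_add_self
      _ = upTruncSum f c (n + (k + 1)) (seqGlue n t (seqCons (t n) r)) :=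
          (upTruncSum_glue (t := t) (r := seqCons (t n) r) rfl).symm
      _ ≤ upTruncVar f a s c := upTruncSum_le_upTruncVar (ht.glue (hr.cons le_rfl h) rfl)

theorem ofReal_sub_sub_le_truncRiseSup {m x y : ℝ} (hx : a ≤ x) (hxy : x < y) (hy : y ≤ m) :
    ENNReal.ofReal (f y - f x - c) ≤ truncRiseSup f a m c :=
  (ENNReal.ofReal_le_ofReal (le_max_left _ 0)).trans <|
    le_iSup_of_le x <| le_iSup_of_le y <| le_iSup_of_le hx <| le_iSup_of_le hxy <|
      le_iSup_of_le hy le_rfl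

theorem truncRiseSup_le_upTruncVar {m : ℝ} : truncRiseSup f a m c ≤ upTruncVar f a m c := by
  refine iSup_le fun x => iSup_le fun y => iSup_le fun hx => iSup_le fun hxy => iSup_le fun hy => ?_
  have hxy' : IsPartition a m 1 (seqCons x fun _ => y) :=
    IsPartition.cons (a' := y) ⟨le_rfl, fun _ hi => absurd hi (by omega), hy⟩ hx hxy
  have := upTruncSum_le_upTruncVar (f := f) (c := c) hxy'
  rwa [upTruncSum_cons, upTruncSum, Finset.sum_range_zero, add_zero] at this

end upTruncVar

section drawdown

variable {f : ℝ → ℝ} {a c m : ℝ}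

theorem upTruncVar_le_truncRiseSup (hbefore : ∀ x ∈ Ico a m, ∀ y ∈ Icc a x, f y - f x < c) :
    upTruncVar f a m c ≤ truncRiseSup f a m c := by
  refine upTruncVar_le fun n t ht => ?_
  rcases upTruncSum_eq_zero_or_le_rise (f := f) (c := c) (t := t) fun i j hij hj =>
      (hbefore _ (ht.mem_Ico hj) _ ⟨(ht.mem_Icc (hij.trans hj.le)).1, ht.le hij hj.le⟩).le
    with h | ⟨i, j, hij, hj, h⟩
  · exact h.le.trans zero_le
  · exact h.trans (ofReal_sub_sub_le_truncRiseSup (ht.mem_Icc (hij.le.trans hj)).1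
      (ht.lt hij hj) (ht.mem_Icc hj).2)

theorem ofReal_rise_le_truncRiseSup_add {x : ℝ} (hx : x ∈ Icc a m)
    (hbefore : ∀ p ∈ Icc a x, f p - f x < c)
    (hm : c ≤ sSup (f '' Icc a m) - f m) (y : ℝ) :
    ENNReal.ofReal (f y - f x - c) ≤
      truncRiseSup f a m c + ENNReal.ofReal (max (f y - f m - c) 0) := by
  refine ENNReal.le_of_forall_pos_le_add fun ε hε _ => ?_
  -- `f p` is within `ε` of the maximum of `f` on `[a, m]`, hence `f m + c - ε < f p`, and the
  -- rise from `x` to `y` is split at `p`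
  obtain ⟨_, ⟨p, hp, rfl⟩, hpε⟩ := exists_lt_of_lt_csSup ⟨f x, mem_image_of_mem f hx⟩
    (sub_lt_self (sSup (f '' Icc a m)) (NNReal.coe_pos.2 hε))
  have hrise : ENNReal.ofReal (f p - f x - c) ≤ truncRiseSup f a m c := by
    rcases le_or_gt p x with hpx | hxp
    · rw [ENNReal.ofReal_of_nonpos (by linarith [hbefore p ⟨hp.1, hpx⟩])]
      exact zero_le
    · exact ofReal_sub_sub_le_truncRiseSup hx.1 hxp hp.2
  calc ENNReal.ofReal (f y - f x - c)
      ≤ ENNReal.ofReal ((f p - f x - c) + (max (f y - f m - c) 0 + ε)) :=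
        ENNReal.ofReal_le_ofReal (by linarith [le_max_left (f y - f m - c) 0])
    _ ≤ ENNReal.ofReal (f p - f x - c) + ENNReal.ofReal (max (f y - f m - c) 0 + ε) :=
        ENNReal.ofReal_add_le
    _ = ENNReal.ofReal (f p - f x - c) + (ENNReal.ofReal (max (f y - f m - c) 0) + ε) := by
        rw [ENNReal.ofReal_add (le_max_right _ _) ε.coe_nonneg, ENNReal.ofReal_coe_nnreal]
    _ ≤ truncRiseSup f a m c + ENNReal.ofReal (max (f y - f m - c) 0) + ε := by
        rw [← add_assoc]
        gcongr

theorem upTruncSum_le_truncRiseSup_add {k : ℕ} {t : ℕ → ℝ}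
    (hbefore : ∀ x ∈ Ico a m, ∀ y ∈ Icc a x, f y - f x < c)
    (hm : c ≤ sSup (f '' Icc a m) - f m) (ht : IsPartition a (t k) k t)
    (hlt : ∀ j < k, t j < m) :
    upTruncSum f c k t ≤ truncRiseSup f a m c + ENNReal.ofReal (max (f (t k) - f m - c) 0) := by
  have hIco : ∀ j < k, t j ∈ Ico a m := fun j hj => ⟨(ht.mem_Icc hj.le).1, hlt j hj⟩
  rcases upTruncSum_eq_zero_or_le_rise (f := f) (c := c) (t := t) fun i j hij hj =>
      (hbefore _ (hIco j hj) _ ⟨(hIco i (hij.trans_lt hj)).1, ht.le hij hj.le⟩).le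
    with h | ⟨i, j, hij, hj, h⟩
  · exact h.le.trans zero_le
  refine h.trans ?_
  rcases hj.lt_or_eq with hjk | rfl
  · exact (ofReal_sub_sub_le_truncRiseSup (hIco i (hij.trans hjk)).1 (ht.lt hij hj)
      (hlt j hjk).le).trans le_self_add
  · exact ofReal_rise_le_truncRiseSup_add (Ico_subset_Icc_self (hIco i hij))
      (hbefore _ (hIco i hij)) hm _

theorem upTruncVar_le_truncRiseSup_add_upTruncVar {s : ℝ}
    (hbefore : ∀ x ∈ Ico a m, ∀ y ∈ Icc a x, f y - f x < c)
    (hm : m < s → c ≤ sSup (f '' Icc a m) - f m) :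
    upTruncVar f a s c ≤ truncRiseSup f a m c + upTruncVar f m s c := by
  refine upTruncVar_le fun n t ht => ?_
  rcases le_or_gt (t n) m with htn | htn
  · calc upTruncSum f c n t ≤ upTruncVar f a m c := upTruncSum_le_upTruncVar ⟨ht.1, ht.2.1, htn⟩
      _ ≤ truncRiseSup f a m c := upTruncVar_le_truncRiseSup hbefore
      _ ≤ _ := le_self_add
  classical
  have hex : ∃ j, m ≤ t j := ⟨n, htn.le⟩
  set k := Nat.find hex
  have hkn : k ≤ n := Nat.find_min' hex htn.le
  have hlt : ∀ j < k, t j < m := fun j hj => not_le.1 (Nat.find_min hex hj)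
  rw [← Nat.add_sub_cancel' hkn, upTruncSum_add]
  rcases (Nat.find_spec hex).eq_or_lt with hkm | hkm
  · rw [hkm]
    gcongr
    · exact (upTruncSum_le_upTruncVar (ht.head hkn)).trans
        (upTruncVar_le_truncRiseSup (hkm ▸ hbefore))
    · exact upTruncSum_le_upTruncVar (ht.tail hkn)
  · calc upTruncSum f c k t + upTruncSum f c (n - k) (fun i => t (k + i))
        ≤ truncRiseSup f a m c + ENNReal.ofReal (max (f (t k) - f m - c) 0) +
            upTruncSum f c (n - k) (fun i => t (k + i)) := by
          gcongr
          exact upTruncSum_le_truncRiseSup_add hbefore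
            (hm (hkm.trans_le (ht.mem_Icc hkn).2)) (ht.head hkn) hlt
      _ = truncRiseSup f a m c + upTruncSum f c (n - k + 1) (seqCons m fun i => t (k + i)) := by
          rw [add_assoc, upTruncSum_cons]
          rfl
      _ ≤ truncRiseSup f a m c + upTruncVar f m s c := by
          gcongr
          exact upTruncSum_le_upTruncVar ((ht.tail hkn).cons le_rfl hkm)

end drawdown

theorem CadlagOn.bddAbove_image_Icc {f : ℝ → ℝ} {a b : ℝ} (hf : CadlagOn f a b) :
    BddAbove (f '' Icc a b) := by
  refine isCompact_Icc.induction_on (p := fun s => BddAbove (f '' s)) (by simp)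
    (fun s t hst ht => ht.mono (image_mono hst))
    (fun s t hs ht => by rw [image_union]; exact hs.union ht) fun x hx => ?_
  obtain ⟨M₁, hleft⟩ : ∃ M, ∀ᶠ y in 𝓝[Icc a b ∩ Iio x] x, f y ≤ M := by
    rcases hx.1.eq_or_lt with rfl | hax
    · exact ⟨0, eventually_nhdsWithin_of_forall fun y hy => absurd hy.2 (not_lt.2 hy.1.1)⟩
    · obtain ⟨L, hL⟩ := hf.2 x ⟨hax, hx.2⟩
      exact ⟨L + 1, (hL.eventually (eventually_le_nhds (lt_add_one L))).filter_mono
        (nhdsWithin_mono x inter_subset_right)⟩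
  obtain ⟨M₂, hright⟩ : ∃ M, ∀ᶠ y in 𝓝[Icc a b ∩ Ici x] x, f y ≤ M := by
    rcases hx.2.eq_or_lt with rfl | hxb
    · exact ⟨f x, eventually_nhdsWithin_of_forall fun y hy => (le_antisymm hy.1.2 hy.2) ▸ le_rfl⟩
    · exact ⟨f x + 1, ((continuousWithinAt_Ioi_iff_Ici.1 (hf.1 x ⟨hx.1, hxb⟩)).eventually
        (eventually_le_nhds (lt_add_one _))).filter_mono (nhdsWithin_mono x inter_subset_right)⟩
  refine ⟨{y | f y ≤ max M₁ M₂}, ?_, max M₁ M₂, by rintro _ ⟨y, hy, rfl⟩; exact hy⟩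
  rw [← inter_univ (Icc a b), ← Iio_union_Ici (a := x), inter_union_distrib_left,
    nhdsWithin_union]
  exact mem_sup.2 ⟨hleft.mono fun _ hy => le_max_of_le_left hy,
    hright.mono fun _ hy => le_max_of_le_right hy⟩

section firstDownTime

variable {f : ℝ → ℝ} {a b c : ℝ}

theorem firstDownTime_mem_Icc (hab : a ≤ b) : firstDownTime f a b c ∈ Icc a b := by
  unfold firstDownTime
  split_ifs with h
  · exact ⟨hab, le_rfl⟩
  · obtain ⟨x, hx⟩ := nonempty_iff_ne_empty.2 h
    exact ⟨le_csInf ⟨x, hx⟩ fun z hz => hz.1.1, (csInf_le ⟨a, fun z hz => hz.1.1⟩ hx).trans hx.1.2⟩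

theorem firstDownTime_le {x : ℝ} (hx : x ∈ Icc a b) (hxc : c ≤ sSup (f '' Icc a x) - f x) :
    firstDownTime f a b c ≤ x := by
  have hxD : x ∈ {z ∈ Icc a b | c ≤ sSup (f '' Icc a z) - f z} := ⟨hx, hxc⟩
  unfold firstDownTime
  rw [if_neg (nonempty_of_mem hxD).ne_empty]
  exact csInf_le ⟨a, fun z hz => hz.1.1⟩ hxD

theorem sub_lt_of_lt_firstDownTime (hbdd : BddAbove (f '' Icc a b)) {x y : ℝ}
    (hx : x ∈ Icc a b) (hxT : x < firstDownTime f a b c) (hy : y ∈ Icc a x) : f y - f x < c := by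
  have hy_le : f y ≤ sSup (f '' Icc a x) :=
    le_csSup (hbdd.mono (image_mono (Icc_subset_Icc_right hx.2))) (mem_image_of_mem f hy)
  have hx_lt : sSup (f '' Icc a x) - f x < c :=
    not_le.1 fun h => (firstDownTime_le hx h).not_gt hxT
  linarith

theorem le_sSup_sub_firstDownTime (hbdd : BddAbove (f '' Icc a b))
    (hTb : firstDownTime f a b c < b)
    (hcont : ContinuousWithinAt f (Ioi (firstDownTime f a b c)) (firstDownTime f a b c)) :
    c ≤ sSup (f '' Icc a (firstDownTime f a b c)) - f (firstDownTime f a b c) := by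
  set T := firstDownTime f a b c with hT
  set D := {x ∈ Icc a b | c ≤ sSup (f '' Icc a x) - f x}
  have hD : D.Nonempty :=
    nonempty_iff_ne_empty.2 fun h => hTb.ne (by rw [hT, firstDownTime, if_pos h])
  have hTD : IsGLB D T := by
    rw [hT, firstDownTime, if_neg hD.ne_empty]
    exact isGLB_csInf hD ⟨a, fun z hz => hz.1.1⟩
  have haT : a ≤ T := hTD.2 fun z hz => hz.1.1
  have hbddT : BddAbove (f '' Icc a T) := hbdd.mono (image_mono (Icc_subset_Icc_right hTb.le))
  -- times of `D` accumulate at `T` from the right, and right-continuity carries their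
  -- drawdown `≥ c` over to `T`
  refine le_of_forall_pos_lt_add fun ε hε => ?_
  obtain ⟨u, hTu, hu⟩ := mem_nhdsGE_iff_exists_Ico_subset.1
    (continuousWithinAt_Ioi_iff_Ici.1 hcont
      (Ioo_mem_nhds (sub_lt_self (f T) (half_pos hε)) (lt_add_of_pos_right (f T) (half_pos hε))))
  obtain ⟨x, ⟨-, hxc⟩, hxu⟩ :=
    ((hTD.frequently_mem hD).and_eventually (Ico_mem_nhdsGE hTu)).exists
  have hsup : sSup (f '' Icc a x) ≤ sSup (f '' Icc a T) + ε / 2 := by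
    refine csSup_le ⟨f a, mem_image_of_mem f ⟨le_rfl, haT.trans hxu.1⟩⟩ ?_
    rintro _ ⟨y, hy, rfl⟩
    rcases le_or_gt y T with hyT | hTy
    · linarith [le_csSup hbddT (mem_image_of_mem f ⟨hy.1, hyT⟩)]
    · linarith [(hu ⟨hTy.le, hy.2.trans_lt hxu.2⟩).2,
        le_csSup hbddT (mem_image_of_mem f ⟨haT, le_rfl⟩)]
  linarith [(hu hxu).1]

end firstDownTime

theorem upTruncVar_split_at_first_down_time_general
    (a b c : ℝ) (hab : a < b) (f : ℝ → ℝ) (hf : CadlagOn f a b) :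
    ∀ s ∈ Set.Ioc a b,
      upTruncVar f a s c =
        (⨆ (t : ℝ) (u : ℝ) (_ : a ≤ t) (_ : t < u) (_ : u ≤ min (firstDownTime f a b c) s),
          ENNReal.ofReal (max (f u - f t - c) 0)) +
        upTruncVar f (min (firstDownTime f a b c) s) s c := by
  rintro s ⟨has, hsb⟩
  set T := firstDownTime f a b c
  have hbdd := hf.bddAbove_image_Icc
  have haT : a ≤ T := (firstDownTime_mem_Icc hab.le).1
  have hbefore : ∀ x ∈ Ico a (min T s), ∀ y ∈ Icc a x, f y - f x < c := fun x hx _ hy =>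
    sub_lt_of_lt_firstDownTime hbdd ⟨hx.1, hx.2.le.trans ((min_le_right T s).trans hsb)⟩
      (hx.2.trans_le (min_le_left T s)) hy
  have hdown : min T s < s → c ≤ sSup (f '' Icc a (min T s)) - f (min T s) := fun h => by
    have hTs : T < s := (min_lt_iff.1 h).resolve_right (lt_irrefl s)
    rw [min_eq_left hTs.le]
    exact le_sSup_sub_firstDownTime hbdd (hTs.trans_le hsb) (hf.1 T ⟨haT, hTs.trans_le hsb⟩)
  show _ = truncRiseSup f a (min T s) c + _
  exact le_antisymm (upTruncVar_le_truncRiseSup_add_upTruncVar hbefore hdown)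
    ((add_le_add_left truncRiseSup_le_upTruncVar _).trans
      (upTruncVar_add_le (le_min haT has.le) (min_le_right T s)))

/-- Decomposition of `UTV^c(f,[a,s])` at the first downward jump time `T` of size `c`. -/
theorem upTruncVar_split_at_first_down_time
    (a b c : ℝ) (hab : a < b) (hc : 0 < c) (f : ℝ → ℝ) (hf : CadlagOn f a b) :
    ∀ s ∈ Set.Ioc a b,
      upTruncVar f a s c =
        (⨆ (t : ℝ) (u : ℝ) (_ : a ≤ t) (_ : t < u) (_ : u ≤ min (firstDownTime f a b c) s),
          ENNReal.ofReal (max (f u - f t - c) 0)) +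
        upTruncVar f (min (firstDownTime f a b c) s) s c :=
  upTruncVar_split_at_first_down_time_general a b c hab f hf
end

section
/- Let a < b, let f : [a,b] → ℝ be càdlàg on [a,b], and let c > 0. Then there do not exist infinite sequences (s_k)_{k≥1} and (S_k)_{k≥1} with a ≤ s_1 < S_1 < s_2 < S_2 < ... ≤ b and f(S_k) − f(s_k) ≥ c/2 for every k ≥ 1. -/
open Set Filter Topology ENNReal

/-!
Both sequences increase to a common limit `x ≤ b`, approached strictly from the left, so
`f (s k)` and `f (S k)` both converge to the left limit of `f` at `x` and their difference tends
to `0`, which is incompatible with `c / 2 ≤ f (S k) - f (s k)`.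
-/

theorem StrictMono.tendsto_atTop_nhdsLT_ciSup {ι α : Type*} [PartialOrder ι] [NoMaxOrder ι]
    [ConditionallyCompleteLinearOrder α] [TopologicalSpace α] [OrderTopology α] {f : ι → α}
    (hf : StrictMono f) (hbdd : BddAbove (range f)) :
    Tendsto f atTop (𝓝[<] ⨆ i, f i) :=
  tendsto_nhdsWithin_of_tendsto_nhds_of_eventually_within _
    (tendsto_atTop_ciSup hf.monotone hbdd) <| Eventually.of_forall fun i =>
      let ⟨j, hij⟩ := exists_gt i
      (hf hij).trans_le (le_ciSup hbdd j)

theorem exists_tendsto_nhdsLT_of_interleaved {s S : ℕ → ℝ} {b : ℝ} (hsS : ∀ k, s k < S k)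
    (hSs : ∀ k, S k < s (k + 1)) (hSb : ∀ k, S k ≤ b) :
    ∃ x ∈ Ioc (s 0) b, Tendsto s atTop (𝓝[<] x) ∧ Tendsto S atTop (𝓝[<] x) := by
  have hmono : StrictMono s := strictMono_nat_of_lt_succ fun k => (hsS k).trans (hSs k)
  have hsb : ∀ k, s k ≤ b := fun k => (hsS k).le.trans (hSb k)
  have hbdd : BddAbove (range s) := ⟨b, forall_mem_range.2 hsb⟩
  have hs := hmono.tendsto_atTop_nhdsLT_ciSup hbdd
  refine ⟨⨆ k, s k, ⟨(hmono zero_lt_one).trans_le (le_ciSup hbdd 1), ciSup_le hsb⟩, hs, ?_⟩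
  obtain ⟨hs_nhds, hs_lt⟩ := tendsto_nhdsWithin_iff.1 (hs.comp (tendsto_add_atTop_nat 1))
  refine tendsto_nhdsWithin_iff.2 ⟨?_, hs_lt.mono fun k hk => (hSs k).trans hk⟩
  exact tendsto_of_tendsto_of_tendsto_of_le_of_le (tendsto_nhds_of_tendsto_nhdsWithin hs)
    hs_nhds (fun k => (hsS k).le) (fun k => (hSs k).le)

theorem no_infinite_oscillation_sequence_general
    (a b c : ℝ) (hc : 0 < c) (f : ℝ → ℝ) (hf : CadlagOn f a b) :
    ¬ ∃ s S : ℕ → ℝ, (∀ k, a ≤ s k) ∧ (∀ k, s k < S k) ∧ (∀ k, S k < s (k + 1)) ∧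
      (∀ k, S k ≤ b) ∧ (∀ k, c / 2 ≤ f (S k) - f (s k)) := by
  rintro ⟨s, S, has, hsS, hSs, hSb, hosc⟩
  obtain ⟨x, ⟨hsx, hxb⟩, hs, hS⟩ := exists_tendsto_nhdsLT_of_interleaved hsS hSs hSb
  obtain ⟨L, hL⟩ := hf.2 x ⟨(has 0).trans_lt hsx, hxb⟩
  have hgap : Tendsto (fun k => f (S k) - f (s k)) atTop (𝓝 0) := by
    simpa using (hL.comp hS).sub (hL.comp hs)
  have : c / 2 ≤ 0 := ge_of_tendsto' hgap hosc
  linarith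

/-- A càdlàg function admits no infinite sequence of upward oscillations of size `c/2`. -/
theorem no_infinite_oscillation_sequence
    (a b c : ℝ) (hab : a < b) (hc : 0 < c) (f : ℝ → ℝ) (hf : CadlagOn f a b) :
    ¬ ∃ s S : ℕ → ℝ, (∀ k, a ≤ s k) ∧ (∀ k, s k < S k) ∧ (∀ k, S k < s (k + 1)) ∧
      (∀ k, S k ≤ b) ∧ (∀ k, c / 2 ≤ f (S k) - f (s k)) :=
  no_infinite_oscillation_sequence_general a b c hc f hf
end

section
/- Let a < b, let f : [a,b] → ℝ be càdlàg on [a,b], and let c > 0. If g : [a,b] → ℝ satisfies |(g(s) − g(u)) − (f(s) − f(u))| ≤ c for all a ≤ u < s ≤ b, then TV(g,[a,s]) ≥ TV^c(f,[a,s]) for every s ∈ (a,b] (as elements of [0,∞]). -/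
open Set Filter Topology ENNReal

theorem mem_Icc_of_partition {t : ℕ → ℝ} {n i : ℕ} {a b : ℝ} (h0 : a ≤ t 0)
    (ht : ∀ j < n, t j < t (j + 1)) (hn : t n ≤ b) (hi : i ≤ n) : t i ∈ Icc a b :=
  have hmono := (strictMonoOn_Iic_of_lt_succ (ψ := t) ht).monotoneOn
  ⟨h0.trans (hmono (Nat.zero_le n) hi (Nat.zero_le i)),
    (hmono hi (le_refl n) hi).trans hn⟩

theorem truncVar_le_truncVar_of_increment_le {f g : ℝ → ℝ} {a b c d : ℝ}
    (h : ∀ u ∈ Icc a b, ∀ s ∈ Icc a b, u < s → |f s - f u| - c ≤ |g s - g u| - d) :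
    truncVar f a b c ≤ truncVar g a b d := by
  refine iSup_le fun n ↦ iSup_le fun t ↦ iSup_le fun h0 ↦ iSup_le fun ht ↦ iSup_le fun hn ↦ ?_
  refine le_trans ?_ (le_iSup_of_le n <| le_iSup_of_le t <| le_iSup_of_le h0 <|
    le_iSup_of_le ht <| le_iSup_of_le hn le_rfl)
  refine Finset.sum_le_sum fun i hi ↦ ENNReal.ofReal_le_ofReal ?_
  have hi := Finset.mem_range.mp hi
  exact max_le_max_right 0 <| h _ (mem_Icc_of_partition h0 ht hn hi.le) _
    (mem_Icc_of_partition h0 ht hn hi) (ht i hi)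

theorem abs_sub_le_abs_of_abs_sub_le {x y c : ℝ} (h : |y - x| ≤ c) : |x| - c ≤ |y| := by
  linarith [abs_sub_abs_le_abs_sub x y, abs_sub_comm x y]

theorem tv_ge_truncVar_of_increment_approx_general
    (a b c : ℝ) (f g : ℝ → ℝ)
    (hincr : ∀ u ∈ Set.Icc a b, ∀ s ∈ Set.Icc a b, u < s →
      |(g s - g u) - (f s - f u)| ≤ c) :
    ∀ s ∈ Set.Ioc a b, truncVar f a s c ≤ totalVar g a s := by
  intro s hs
  have hsub : Icc a s ⊆ Icc a b := Icc_subset_Icc_right hs.2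
  refine truncVar_le_truncVar_of_increment_le fun u hu v hv huv ↦ ?_
  rw [sub_zero]
  exact abs_sub_le_abs_of_abs_sub_le (hincr u (hsub hu) v (hsub hv) huv)

/-- If the increments of `g` approximate the increments of `f` with accuracy `c`, then
`TV(g,[a,s]) ≥ TV^c(f,[a,s])` for every `s ∈ (a,b]`. -/
theorem tv_ge_truncVar_of_increment_approx
    (a b c : ℝ) (hab : a < b) (hc : 0 < c) (f g : ℝ → ℝ) (hf : CadlagOn f a b)
    (hincr : ∀ u ∈ Set.Icc a b, ∀ s ∈ Set.Icc a b, u < s →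
      |(g s - g u) - (f s - f u)| ≤ c) :
    ∀ s ∈ Set.Ioc a b, truncVar f a s c ≤ totalVar g a s :=
  tv_ge_truncVar_of_increment_approx_general a b c f g hincr
end
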